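/- arXiv:1601.04912 — 2 statements merged into one kernel-verified Lean document; each statement's English description precedes it below -/
import Mathlib

section
/- Let A be a real 6×6 matrix with 3×3-block decomposition A = [[A_yy, A_yz],[A_zy, A_zz]] such that A_zz is invertible, let J = diag(2^{−1/2}, 2^{−1/2}, 1), and define the 3×6 matrix function 𝒳(ζ) = J⁻¹ A_zz⁻¹ A_zy · ( −ζ·I₃ | 2^{1/2}(ζ²/2 − 1/24)·I₃ ) for ζ ∈ ℝ. Then for every ζ the derivative satisfies A_zz · J · 𝒳′(ζ) = −A_zy · ( I₃ | −2^{1/2} ζ · I₃ ); in particular 𝒳 solves the two-point boundary-value problem −A_zz · J · 𝒳″(ζ) = A_zy · ( O₃ | −2^{1/2} I₃ ) for ζ ∈ (−1/2, 1/2), together with the boundary conditions ±A_zz · J · 𝒳′(±1/2) = ∓A_zy · ( I₃ | ∓2^{−1/2} I₃ ). -/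
/- STATEMENT 1: With A a real 6×6 matrix whose lower-right 3×3 block A_zz is invertible,
J = diag(2^{−1/2}, 2^{−1/2}, 1), and
𝒳(ζ) = J⁻¹ A_zz⁻¹ A_zy · ( −ζ·I₃ | 2^{1/2}(ζ²/2 − 1/24)·I₃ ),
one has A_zz · J · 𝒳′(ζ) = −A_zy · ( I₃ | −2^{1/2} ζ · I₃ ) for all ζ; in particular 𝒳 solves
−A_zz · J · 𝒳″(ζ) = A_zy · ( O₃ | −2^{1/2} I₃ ) on (−1/2, 1/2) with the boundary conditions
±A_zz · J · 𝒳′(±1/2) = ∓A_zy · ( I₃ | ∓2^{−1/2} I₃ ). -/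

open Matrix

noncomputable section

def lo3 : Fin 3 → Fin 6 := fun i => ⟨i, by omega⟩
def hi3 : Fin 3 → Fin 6 := fun i => ⟨i + 3, by omega⟩

/-- Lower-left 3×3 block (last three rows, first three columns). -/
def Azy (A : Matrix (Fin 6) (Fin 6) ℝ) : Matrix (Fin 3) (Fin 3) ℝ := A.submatrix hi3 lo3

/-- Lower-right 3×3 block (last three rows and columns). -/
def Azz (A : Matrix (Fin 6) (Fin 6) ℝ) : Matrix (Fin 3) (Fin 3) ℝ := A.submatrix hi3 hi3

/-- The diagonal matrix J = diag(2^{−1/2}, 2^{−1/2}, 1). -/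
def Jmat : Matrix (Fin 3) (Fin 3) ℝ :=
  Matrix.diagonal ![(Real.sqrt 2)⁻¹, (Real.sqrt 2)⁻¹, 1]

/-- Horizontal concatenation ( M | N ) of two 3×3 blocks into a 3×6 matrix. -/
def hcat (M N : Matrix (Fin 3) (Fin 3) ℝ) : Matrix (Fin 3) (Fin 6) ℝ :=
  Matrix.of fun i j =>
    if h : (j : ℕ) < 3 then M i ⟨j, h⟩ else N i ⟨(j : ℕ) - 3, by omega⟩

/-- The 3×6 matrix function 𝒳(ζ) = J⁻¹ A_zz⁻¹ A_zy · ( −ζ·I₃ | 2^{1/2}(ζ²/2 − 1/24)·I₃ ). -/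
def Xmat (A : Matrix (Fin 6) (Fin 6) ℝ) (ζ : ℝ) : Matrix (Fin 3) (Fin 6) ℝ :=
  Jmat⁻¹ * (Azz A)⁻¹ * Azy A *
    hcat ((-ζ) • (1 : Matrix (Fin 3) (Fin 3) ℝ))
      ((Real.sqrt 2 * (ζ ^ 2 / 2 - 1 / 24)) • (1 : Matrix (Fin 3) (Fin 3) ℝ))

/-- Entrywise derivative 𝒳′(ζ). -/
def Xd (A : Matrix (Fin 6) (Fin 6) ℝ) (ζ : ℝ) : Matrix (Fin 3) (Fin 6) ℝ :=
  Matrix.of fun i j => deriv (fun t => Xmat A t i j) ζ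

/-- Entrywise second derivative 𝒳″(ζ). -/
def Xdd (A : Matrix (Fin 6) (Fin 6) ℝ) (ζ : ℝ) : Matrix (Fin 3) (Fin 6) ℝ :=
  Matrix.of fun i j => deriv (fun t => Xd A t i j) ζ

/-! With the constant matrix B = J⁻¹ A_zz⁻¹ A_zy one has 𝒳(ζ) = ( −ζ B | √2(ζ²/2 − 1/24) B ),
so the derivatives are those of two scalar polynomials times B, and A_zz J B = A_zy. -/

lemma mul_hcat (M P Q : Matrix (Fin 3) (Fin 3) ℝ) :
    M * hcat P Q = hcat (M * P) (M * Q) := by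
  ext i j
  by_cases h : (j : ℕ) < 3 <;> simp [hcat, Matrix.mul_apply, h]

lemma neg_hcat (M N : Matrix (Fin 3) (Fin 3) ℝ) : -hcat M N = hcat (-M) (-N) := by
  ext i j
  by_cases h : (j : ℕ) < 3 <;> simp [hcat, h]

lemma hasDerivAt_hcat_smul_apply {f g : ℝ → ℝ} {f' g' ζ : ℝ} (hf : HasDerivAt f f' ζ)
    (hg : HasDerivAt g g' ζ) (M : Matrix (Fin 3) (Fin 3) ℝ) (i : Fin 3) (j : Fin 6) :
    HasDerivAt (fun t => hcat (f t • M) (g t • M) i j) (hcat (f' • M) (g' • M) i j) ζ := by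
  by_cases h : (j : ℕ) < 3
  · simpa [hcat, h] using hf.mul_const _
  · simpa [hcat, h] using hg.mul_const _

lemma isUnit_det_Jmat : IsUnit Jmat.det := by
  simp [Jmat, Matrix.det_diagonal, Fin.prod_univ_three]

lemma mul_mul_inv_mul_inv_mul_cancel {n m α : Type*} [Fintype n] [DecidableEq n] [CommRing α]
    {P Q : Matrix n n α} (hP : IsUnit P.det) (hQ : IsUnit Q.det) (R : Matrix n m α) :
    P * Q * (Q⁻¹ * P⁻¹ * R) = R := by
  rw [← Matrix.mul_inv_rev]
  exact Matrix.mul_nonsing_inv_cancel_left _ _ (by simpa using hP.mul hQ)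

lemma Xmat_eq (A : Matrix (Fin 6) (Fin 6) ℝ) (ζ : ℝ) :
    Xmat A ζ = hcat ((-ζ) • (Jmat⁻¹ * (Azz A)⁻¹ * Azy A))
      ((Real.sqrt 2 * (ζ ^ 2 / 2 - 1 / 24)) • (Jmat⁻¹ * (Azz A)⁻¹ * Azy A)) := by
  simp only [Xmat, mul_hcat, Matrix.mul_smul, Matrix.mul_one]

lemma Xd_eq (A : Matrix (Fin 6) (Fin 6) ℝ) (ζ : ℝ) :
    Xd A ζ = hcat ((-1 : ℝ) • (Jmat⁻¹ * (Azz A)⁻¹ * Azy A))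
      ((Real.sqrt 2 * ζ) • (Jmat⁻¹ * (Azz A)⁻¹ * Azy A)) := by
  have hf : HasDerivAt (fun t : ℝ => -t) (-1) ζ := (hasDerivAt_id ζ).neg
  have hg : HasDerivAt (fun t : ℝ => Real.sqrt 2 * (t ^ 2 / 2 - 1 / 24)) (Real.sqrt 2 * ζ) ζ := by
    refine ((((hasDerivAt_pow 2 ζ).div_const 2).sub_const (1 / 24)).const_mul
      (Real.sqrt 2)).congr_deriv ?_
    norm_num
  ext i j
  simp only [Xd, Xmat_eq, Matrix.of_apply]
  exact (hasDerivAt_hcat_smul_apply hf hg _ i j).deriv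

lemma Xdd_eq (A : Matrix (Fin 6) (Fin 6) ℝ) (ζ : ℝ) :
    Xdd A ζ = hcat ((0 : ℝ) • (Jmat⁻¹ * (Azz A)⁻¹ * Azy A))
      (Real.sqrt 2 • (Jmat⁻¹ * (Azz A)⁻¹ * Azy A)) := by
  have hg : HasDerivAt (fun t : ℝ => Real.sqrt 2 * t) (Real.sqrt 2) ζ := by
    simpa using (hasDerivAt_id ζ).const_mul (Real.sqrt 2)
  ext i j
  simp only [Xdd, Xd_eq, Matrix.of_apply]
  exact (hasDerivAt_hcat_smul_apply (hasDerivAt_const ζ (-1 : ℝ)) hg _ i j).deriv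

lemma Azz_mul_Jmat_mul_hcat_smul (A : Matrix (Fin 6) (Fin 6) ℝ) (hAzz : IsUnit (Azz A))
    (a b : ℝ) :
    Azz A * Jmat * hcat (a • (Jmat⁻¹ * (Azz A)⁻¹ * Azy A)) (b • (Jmat⁻¹ * (Azz A)⁻¹ * Azy A)) =
      Azy A * hcat (a • 1) (b • 1) := by
  have hcancel := mul_mul_inv_mul_inv_mul_cancel
    ((Matrix.isUnit_iff_isUnit_det _).mp hAzz) isUnit_det_Jmat (Azy A)
  simp only [mul_hcat, Matrix.mul_smul, hcancel, Matrix.mul_one]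

theorem Xmat_solves_transverse_problem (A : Matrix (Fin 6) (Fin 6) ℝ)
    (hAzz : IsUnit (Azz A)) :
    (∀ ζ : ℝ,
      Azz A * Jmat * Xd A ζ =
        -(Azy A * hcat (1 : Matrix (Fin 3) (Fin 3) ℝ)
            ((-(Real.sqrt 2) * ζ) • (1 : Matrix (Fin 3) (Fin 3) ℝ)))) ∧
    (∀ ζ ∈ Set.Ioo (-(1 : ℝ) / 2) (1 / 2),
      -(Azz A * Jmat * Xdd A ζ) =
        Azy A * hcat (0 : Matrix (Fin 3) (Fin 3) ℝ)
          ((-(Real.sqrt 2)) • (1 : Matrix (Fin 3) (Fin 3) ℝ))) ∧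
    (Azz A * Jmat * Xd A (1 / 2) =
      -(Azy A * hcat (1 : Matrix (Fin 3) (Fin 3) ℝ)
          ((-(Real.sqrt 2)⁻¹) • (1 : Matrix (Fin 3) (Fin 3) ℝ)))) ∧
    (-(Azz A * Jmat * Xd A (-(1 / 2))) =
      Azy A * hcat (1 : Matrix (Fin 3) (Fin 3) ℝ)
        (((Real.sqrt 2)⁻¹) • (1 : Matrix (Fin 3) (Fin 3) ℝ))) := by
  have hXd : ∀ ζ : ℝ, Azz A * Jmat * Xd A ζ =
      -(Azy A * hcat 1 ((-(Real.sqrt 2) * ζ) • 1)) := by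
    intro ζ
    rw [Xd_eq, Azz_mul_Jmat_mul_hcat_smul A hAzz, ← Matrix.mul_neg, neg_hcat]
    congr 2 <;> simp
  have hhalf : Real.sqrt 2 * (1 / 2) = (Real.sqrt 2)⁻¹ := by
    field_simp
    simp
  refine ⟨hXd, fun ζ _ => ?_, ?_, ?_⟩
  · rw [Xdd_eq, Azz_mul_Jmat_mul_hcat_smul A hAzz, ← Matrix.mul_neg, neg_hcat]
    congr 2 <;> simp
  · rw [hXd, neg_mul, hhalf]
  · rw [hXd, neg_neg, neg_mul_neg, hhalf]
end
end

section
/- There exists a constant c > 0 such that for every h ∈ (0, 1/2], ∫_h^1 r (1 + |ln r|)² · ( (r² + h²) (1 + |ln(r + h)|)² )⁻¹ dr ≤ c (1 + |ln h|). (Radial form of the weighted-norm estimate used in the proof of Theorem 4.52 to bound |||G^{♯θ} a; Ω_h|||.) -/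
/-!
For `h ≤ r` we have `r ≤ r + h ≤ 2r`, so `ln r` and `ln (r + h)` differ by at most `ln 2 ≤ 1`
and the logarithmic factors cancel up to the constant `4`. What is left is bounded by
`4 r / (r² + h²) ≤ 4 / r`, whose integral over `(h, 1)` is `4 |ln h|`.
-/

open MeasureTheory intervalIntegral Real

lemma abs_log_le_abs_log_add_one {x y : ℝ} (hx : 0 < x) (hxy : x ≤ y) (hy : y ≤ 2 * x) :
    |log x| ≤ |log y| + 1 := by
  have hdiff : |log x - log y| ≤ 1 := by
    rw [abs_sub_comm, ← log_div (hx.trans_le hxy).ne' hx.ne', abs_of_nonneg]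
    · linarith [log_le_sub_one_of_pos (div_pos (hx.trans_le hxy) hx),
        (div_le_iff₀ hx).2 hy]
    · exact log_nonneg ((le_div_iff₀ hx).2 (by linarith))
  linarith [abs_sub_abs_le_abs_sub (log x) (log y)]

lemma one_add_abs_log_sq_le {x y : ℝ} (hx : 0 < x) (hxy : x ≤ y) (hy : y ≤ 2 * x) :
    (1 + |log x|) ^ 2 ≤ 4 * (1 + |log y|) ^ 2 := by
  have := abs_log_le_abs_log_add_one hx hxy hy
  nlinarith [abs_nonneg (log x), abs_nonneg (log y)]

noncomputable def radialWeight (h r : ℝ) : ℝ :=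
  r * (1 + |log r|) ^ 2 / ((r ^ 2 + h ^ 2) * (1 + |log (r + h)|) ^ 2)

lemma radialWeight_le {h r : ℝ} (hh : 0 ≤ h) (hr : 0 < r) (hhr : h ≤ r) :
    radialWeight h r ≤ 4 * r⁻¹ := by
  have hlog := one_add_abs_log_sq_le hr (le_add_of_nonneg_right hh) (by linarith)
  rw [radialWeight, div_le_iff₀ (by positivity)]
  calc r * (1 + |log r|) ^ 2 ≤ r * (4 * (1 + |log (r + h)|) ^ 2) := by gcongr
    _ = 4 * r⁻¹ * (r ^ 2 * (1 + |log (r + h)|) ^ 2) := by field_simp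
    _ ≤ 4 * r⁻¹ * ((r ^ 2 + h ^ 2) * (1 + |log (r + h)|) ^ 2) := by
        gcongr; nlinarith

lemma continuousOn_radialWeight {h : ℝ} (hh : 0 ≤ h) :
    ContinuousOn (radialWeight h) (Set.Ioi 0) := by
  unfold radialWeight
  fun_prop (disch := intro r (hr : 0 < r); first | positivity | exact hr.ne')

theorem radial_weighted_log_estimate :
    ∃ c : ℝ, 0 < c ∧ ∀ h ∈ Set.Ioc (0 : ℝ) (1 / 2),
      (∫ r in h..1,
          r * (1 + |Real.log r|) ^ 2 /
            ((r ^ 2 + h ^ 2) * (1 + |Real.log (r + h)|) ^ 2)) ≤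
        c * (1 + |Real.log h|) := by
  refine ⟨4, by norm_num, fun h ⟨hh, hh2⟩ => ?_⟩
  have h1 : h ≤ 1 := by linarith
  have hIcc : Set.uIcc h 1 ⊆ Set.Ioi 0 := by
    rw [Set.uIcc_of_le h1]; exact fun r hr => hh.trans_le hr.1
  calc ∫ r in h..1, radialWeight h r
      ≤ ∫ r in h..1, 4 * r⁻¹ :=
        integral_mono_on h1 ((continuousOn_radialWeight hh.le).mono hIcc).intervalIntegrable
          (continuousOn_const.mul
            (continuousOn_inv₀.mono fun r hr => (hIcc hr).ne')).intervalIntegrable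
          fun r hr => radialWeight_le hh.le (hh.trans_le hr.1) hr.1
    _ = 4 * -log h := by
        rw [intervalIntegral.integral_const_mul, integral_inv_of_pos hh one_pos, one_div, log_inv]
    _ ≤ 4 * (1 + |log h|) := by gcongr; linarith [neg_le_abs (log h)]
end
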